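/- Let w, t > 0 satisfy 2β w^α ≤ t, with 1 ≤ α ≤ 2 and β > 0. Let f : [0,1] → ℝ be differentiable with |f'(x) - f'(y)| ≤ αβ|x-y|^{α-1}. Fix an interval I = [a, a+w] ⊆ [0,1] with midpoint x₀ = a + w/2. Let δ₁ = t/4, δ₂ = t/(4w), and let ℓ₁δ₁ be a multiple of δ₁ with |f(x₀) - ℓ₁δ₁| ≤ δ₁/2, and ℓ₂δ₂ a multiple of δ₂ with |f'(x₀) - ℓ₂δ₂| ≤ δ₂/2. Define the line g(x) = ℓ₁δ₁ + ℓ₂δ₂(x - x₀). Then for all x ∈ I, |f(x) - g(x)| ≤ t/2. -/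

import Mathlib

/-! The first-order Taylor remainder of `f` at the midpoint `x₀` is bounded by `β |x - x₀| ^ α`,
by comparing it with `β (x - x₀) ^ α`, whose derivative `α β (x - x₀) ^ (α - 1)` dominates the
derivative `f' x - f' x₀` of the remainder. On `I` this is at most `β (w / 2) ^ α ≤ t / 4`, and
rounding the value and the slope of the tangent line costs at most `δ₁ / 2 + (δ₂ / 2)(w / 2)`,
i.e. `t / 8 + t / 16`. -/

open Set

variable {f f' : ℝ → ℝ} {α β a b : ℝ}

theorem abs_taylor_remainder_le_of_holder_right (hα : 1 ≤ α) (hab : a ≤ b)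
    (hf : ∀ x ∈ Icc a b, HasDerivWithinAt f (f' x) (Icc a b) x)
    (hhold : ∀ x ∈ Icc a b, |f' x - f' a| ≤ α * β * (x - a) ^ (α - 1)) :
    |f b - f a - f' a * (b - a)| ≤ β * (b - a) ^ α := by
  set φ : ℝ → ℝ := fun y ↦ f y - f a - f' a * (y - a)
  have hφ : ∀ y ∈ Icc a b, HasDerivWithinAt φ (f' y - f' a) (Icc a b) y := fun y hy ↦ by
    have := ((hf y hy).sub_const (f a)).sub
      (((hasDerivAt_id y).sub_const a).const_mul (f' a)).hasDerivWithinAt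
    rwa [mul_one] at this
  have hB : ∀ y, HasDerivAt (fun y ↦ β * (y - a) ^ α) (β * (1 * α * (y - a) ^ (α - 1))) y :=
    fun y ↦ (((hasDerivAt_id y).sub_const a).rpow_const (Or.inr hα)).const_mul β
  have hφa : ‖φ a‖ ≤ β * (a - a) ^ α := by
    simp [φ, Real.zero_rpow (by linarith : α ≠ 0)]
  have hbound : ∀ y ∈ Ico a b, ‖f' y - f' a‖ ≤ β * (1 * α * (y - a) ^ (α - 1)) := fun y hy ↦ by
    simpa [Real.norm_eq_abs, mul_left_comm, mul_assoc] using hhold y (Ico_subset_Icc_self hy)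
  simpa [Real.norm_eq_abs] using image_norm_le_of_norm_deriv_right_le_deriv_boundary
    (fun y hy ↦ (hφ y hy).continuousWithinAt)
    (fun y hy ↦ (hφ y (Ico_subset_Icc_self hy)).mono_of_mem_nhdsWithin (Icc_mem_nhdsGE_of_mem hy))
    hφa hB hbound (right_mem_Icc.2 hab)

theorem abs_taylor_remainder_le_of_holder_left (hα : 1 ≤ α) (hab : a ≤ b)
    (hf : ∀ x ∈ Icc a b, HasDerivWithinAt f (f' x) (Icc a b) x)
    (hhold : ∀ x ∈ Icc a b, |f' x - f' b| ≤ α * β * (b - x) ^ (α - 1)) :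
    |f a - f b - f' b * (a - b)| ≤ β * (b - a) ^ α := by
  have hneg : MapsTo Neg.neg (Icc (-b) (-a)) (Icc a b) := fun y hy ↦
    ⟨by linarith [hy.2], by linarith [hy.1]⟩
  have hf_neg : ∀ y ∈ Icc (-b) (-a),
      HasDerivWithinAt (fun y ↦ f (-y)) (-f' (-y)) (Icc (-b) (-a)) y := fun y hy ↦ by
    have := (hf (-y) (hneg hy)).comp y (hasDerivAt_neg y).hasDerivWithinAt hneg
    rwa [mul_neg_one] at this
  have hhold_neg : ∀ y ∈ Icc (-b) (-a), |-f' (-y) - -f' (- -b)| ≤ α * β * (y - -b) ^ (α - 1) :=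
    fun y hy ↦ by
      rw [neg_neg, neg_sub_neg, abs_sub_comm, sub_neg_eq_add, add_comm]
      simpa only [sub_neg_eq_add] using hhold (-y) (hneg hy)
  have := abs_taylor_remainder_le_of_holder_right hα (neg_le_neg hab) hf_neg hhold_neg
  rwa [neg_neg, neg_neg, neg_sub_neg, neg_mul_comm, neg_sub] at this

theorem abs_taylor_remainder_le_of_holder {s : Set ℝ} (hs : s.OrdConnected) (hα : 1 ≤ α)
    (hf : ∀ x ∈ s, HasDerivWithinAt f (f' x) s x)
    (hhold : ∀ x ∈ s, ∀ y ∈ s, |f' x - f' y| ≤ α * β * |x - y| ^ (α - 1))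
    {x₀ x : ℝ} (hx₀ : x₀ ∈ s) (hx : x ∈ s) :
    |f x - f x₀ - f' x₀ * (x - x₀)| ≤ β * |x - x₀| ^ α := by
  rcases le_total x₀ x with h | h
  · have hsub := hs.out hx₀ hx
    rw [abs_of_nonneg (sub_nonneg.2 h)]
    refine abs_taylor_remainder_le_of_holder_right hα h (fun y hy ↦ (hf y (hsub hy)).mono hsub)
      fun y hy ↦ ?_
    simpa [abs_of_nonneg (sub_nonneg.2 hy.1)] using hhold y (hsub hy) x₀ hx₀
  · have hsub := hs.out hx hx₀
    rw [abs_of_nonpos (sub_nonpos.2 h), neg_sub]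
    refine abs_taylor_remainder_le_of_holder_left hα h (fun y hy ↦ (hf y (hsub hy)).mono hsub)
      fun y hy ↦ ?_
    simpa [abs_of_nonpos (sub_nonpos.2 hy.2), neg_sub] using hhold y (hsub hy) x₀ hx₀

theorem div_two_rpow_le_rpow_div_two {w : ℝ} (hw : 0 ≤ w) (hα : 1 ≤ α) :
    (w / 2) ^ α ≤ w ^ α / 2 := by
  have htwo : (2 : ℝ) ≤ 2 ^ α := by
    simpa using Real.rpow_le_rpow_of_exponent_le (by norm_num : (1 : ℝ) ≤ 2) hα
  rw [Real.div_rpow hw zero_le_two]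
  exact div_le_div_of_nonneg_left (by positivity) zero_lt_two htwo

theorem strip_covers_graph_general
    (α β w t : ℝ) (hα : 1 ≤ α) (hβ : 0 < β)
    (hw : 0 < w) (hwt : 2 * β * w ^ α ≤ t)
    (f f' : ℝ → ℝ)
    (hderiv : ∀ x ∈ Icc (0:ℝ) 1, HasDerivWithinAt f (f' x) (Icc (0:ℝ) 1) x)
    (hhold : ∀ x ∈ Icc (0:ℝ) 1, ∀ y ∈ Icc (0:ℝ) 1,
      |f' x - f' y| ≤ α * β * |x - y| ^ (α - 1))
    (a : ℝ) (hI : Icc a (a + w) ⊆ Icc (0:ℝ) 1)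
    (x₀ : ℝ) (hx₀ : x₀ = a + w / 2)
    (δ₁ δ₂ : ℝ) (hδ₁ : δ₁ = t / 4) (hδ₂ : δ₂ = t / (4 * w))
    (ℓ₁ ℓ₂ : ℤ)
    (hℓ₁ : |f x₀ - ℓ₁ * δ₁| ≤ δ₁ / 2) (hℓ₂ : |f' x₀ - ℓ₂ * δ₂| ≤ δ₂ / 2)
    (g : ℝ → ℝ) (hg : ∀ x, g x = ℓ₁ * δ₁ + ℓ₂ * δ₂ * (x - x₀)) :
    ∀ x ∈ Icc a (a + w), |f x - g x| ≤ t / 2 := by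
  intro x hx
  have hx₀I : x₀ ∈ Icc a (a + w) := by constructor <;> linarith
  have hdist : |x - x₀| ≤ w / 2 := by rw [abs_le]; constructor <;> linarith [hx.1, hx.2]
  have htaylor : |f x - f x₀ - f' x₀ * (x - x₀)| ≤ t / 4 := calc
    _ ≤ β * |x - x₀| ^ α :=
      abs_taylor_remainder_le_of_holder ordConnected_Icc hα hderiv hhold (hI hx₀I) (hI hx)
    _ ≤ β * (w ^ α / 2) := by
      gcongr
      exact (Real.rpow_le_rpow (abs_nonneg _) hdist (by linarith)).trans
        (div_two_rpow_le_rpow_div_two hw.le hα)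
    _ ≤ t / 4 := by linarith
  have hslope : |(f' x₀ - ℓ₂ * δ₂) * (x - x₀)| ≤ t / 16 := calc
    _ = |f' x₀ - ℓ₂ * δ₂| * |x - x₀| := abs_mul _ _
    _ ≤ δ₂ / 2 * (w / 2) :=
      mul_le_mul hℓ₂ hdist (abs_nonneg _) ((abs_nonneg _).trans hℓ₂)
    _ = t / 16 := by rw [hδ₂]; field_simp; ring
  calc |f x - g x|
      = |(f x - f x₀ - f' x₀ * (x - x₀)) + (f x₀ - ℓ₁ * δ₁) + (f' x₀ - ℓ₂ * δ₂) * (x - x₀)| := by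
        rw [hg]; congr 1; ring
    _ ≤ |f x - f x₀ - f' x₀ * (x - x₀)| + |f x₀ - ℓ₁ * δ₁| + |(f' x₀ - ℓ₂ * δ₂) * (x - x₀)| :=
        abs_add_three _ _ _
    _ ≤ t / 2 := by linarith [abs_nonneg (f x₀ - ℓ₁ * δ₁)]

/-- Lemma 2.2: the strip of thickness t around the quantized tangent line g
covers the graph of f over an interval of width w. -/
theorem strip_covers_graph
    (α β w t : ℝ) (hα : 1 ≤ α) (hα2 : α ≤ 2) (hβ : 0 < β)
    (hw : 0 < w) (ht : 0 < t) (hwt : 2 * β * w ^ α ≤ t)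
    (f f' : ℝ → ℝ)
    (hderiv : ∀ x ∈ Icc (0:ℝ) 1, HasDerivWithinAt f (f' x) (Icc (0:ℝ) 1) x)
    (hhold : ∀ x ∈ Icc (0:ℝ) 1, ∀ y ∈ Icc (0:ℝ) 1,
      |f' x - f' y| ≤ α * β * |x - y| ^ (α - 1))
    (a : ℝ) (hI : Icc a (a + w) ⊆ Icc (0:ℝ) 1)
    (x₀ : ℝ) (hx₀ : x₀ = a + w / 2)
    (δ₁ δ₂ : ℝ) (hδ₁ : δ₁ = t / 4) (hδ₂ : δ₂ = t / (4 * w))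
    (ℓ₁ ℓ₂ : ℤ)
    (hℓ₁ : |f x₀ - ℓ₁ * δ₁| ≤ δ₁ / 2) (hℓ₂ : |f' x₀ - ℓ₂ * δ₂| ≤ δ₂ / 2)
    (g : ℝ → ℝ) (hg : ∀ x, g x = ℓ₁ * δ₁ + ℓ₂ * δ₂ * (x - x₀)) :
    ∀ x ∈ Icc a (a + w), |f x - g x| ≤ t / 2 :=
  strip_covers_graph_general α β w t hα hβ hw hwt f f' hderiv hhold a hI x₀ hx₀ δ₁ δ₂ hδ₁ hδ₂ ℓ₁ ℓ₂
    hℓ₁ hℓ₂ g hg
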